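/- Suppose U, C ∈ GL⁺(H), U and U⁻¹ commute with C, and {f_k} ⊆ H is complete and satisfies L Σ|c_k|² ≤ |⟨Σ c_k Uf_k, Σ c_k Cf_k⟩| ≤ P Σ|c_k|² for all {c_k} ∈ ℓ²(ℕ) and some L, P > 0. Then for any finitely supported {c_k}, ‖Σ_k c_k f_k‖² ≤ ‖(CU)^{-1/2}‖² P Σ_k |c_k|²; in particular Σ_k c_k f_k converges for all {c_k} ∈ ℓ², so {f_k} is a Bessel sequence, and {f_k} is a (U, C)-controlled Riesz basis. -/

import Mathlib

/-!
Write `S = R (C U)`, a self-adjoint square root of `C U` with inverse `R`. Since `U`, `C` are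
self-adjoint and commute, `⟪U g, C g⟫ = ⟪g, C U g⟫ = ‖S g‖²`, so the hypothesis says precisely
that `{S f_k}` has Riesz bounds `L`, `P`; it is complete because `S` is invertible.
As `f_k = R (S f_k)`, the upper bound passes to `{f_k}` with constant `‖R‖² P`; this gives
convergence of `∑ c_k f_k` for `c ∈ ℓ²` and, tested against `c_k = ⟪f_k, f⟫`, the Bessel bound.
Orthonormalising `{S f_k}` by Gram–Schmidt yields a Hilbert basis `e`, and `e_k ↦ S f_k` extends
to a bounded operator `M` which the lower bound makes injective with closed range, hence onto.
Then `f_k = U⁻¹ C (C⁻¹ U R M) e_k`.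
-/

open scoped InnerProductSpace

section RieszBounds

variable {ι E : Type*} (𝕜 : Type*) [RCLike 𝕜] [NormedAddCommGroup E] [NormedSpace 𝕜 E]

def UpperRieszBound (G : ι → E) (B : ℝ) : Prop :=
  ∀ (s : Finset ι) (c : ι → 𝕜), ‖∑ k ∈ s, c k • G k‖ ^ 2 ≤ B * ∑ k ∈ s, ‖c k‖ ^ 2

def LowerRieszBound (G : ι → E) (L : ℝ) : Prop :=
  ∀ (s : Finset ι) (c : ι → 𝕜), L * ∑ k ∈ s, ‖c k‖ ^ 2 ≤ ‖∑ k ∈ s, c k • G k‖ ^ 2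

variable {𝕜}

lemma UpperRieszBound.of_leftInverse {F : Type*} [NormedAddCommGroup F] [NormedSpace 𝕜 F]
    {G : ι → E} {B : ℝ} {S : E →L[𝕜] F} {R : F →L[𝕜] E} (hRS : Function.LeftInverse R S)
    (hG : UpperRieszBound 𝕜 (fun k => S (G k)) B) : UpperRieszBound 𝕜 G (‖R‖ ^ 2 * B) :=
  fun s c =>
    calc ‖∑ k ∈ s, c k • G k‖ ^ 2 = ‖R (S (∑ k ∈ s, c k • G k))‖ ^ 2 := by rw [hRS]
      _ ≤ (‖R‖ * ‖S (∑ k ∈ s, c k • G k)‖) ^ 2 := by gcongr; exact R.le_opNorm _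
      _ ≤ ‖R‖ ^ 2 * B * ∑ k ∈ s, ‖c k‖ ^ 2 := by
          rw [mul_pow, mul_assoc]
          gcongr
          simpa only [map_sum, map_smul] using hG s c

variable [CompleteSpace E] {G : ι → E} {B : ℝ}

lemma UpperRieszBound.summable_smul (hG : UpperRieszBound 𝕜 G B) (hB : 0 ≤ B) {c : ι → 𝕜}
    (hc : Summable fun k => ‖c k‖ ^ 2) : Summable fun k => c k • G k := by
  refine summable_iff_vanishing_norm.2 fun ε hε => ?_
  obtain ⟨s, hs⟩ := summable_iff_vanishing_norm.1 hc (ε ^ 2 / (B + 1)) (by positivity)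
  refine ⟨s, fun t ht => ?_⟩
  have htail : ∑ k ∈ t, ‖c k‖ ^ 2 < ε ^ 2 / (B + 1) :=
    (Real.le_norm_self _).trans_lt (hs t ht)
  have hmul : B * (ε ^ 2 / (B + 1)) < ε ^ 2 := by
    rw [mul_div_assoc', div_lt_iff₀ (by positivity)]
    nlinarith [sq_pos_of_pos hε]
  refine lt_of_pow_lt_pow_left₀ 2 hε.le ((hG t c).trans_lt ?_)
  exact (mul_le_mul_of_nonneg_left htail.le hB).trans_lt hmul

lemma UpperRieszBound.norm_tsum_smul_sq_le (hG : UpperRieszBound 𝕜 G B) (hB : 0 ≤ B)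
    {c : ι → 𝕜} (hc : Summable fun k => ‖c k‖ ^ 2) :
    ‖∑' k, c k • G k‖ ^ 2 ≤ B * ∑' k, ‖c k‖ ^ 2 :=
  le_of_tendsto' ((hG.summable_smul hB hc).hasSum.norm.pow 2) fun s =>
    (hG s c).trans (mul_le_mul_of_nonneg_left (hc.sum_le_tsum s fun _ _ => sq_nonneg _) hB)

end RieszBounds

section InnerProductSpace

variable {ι 𝕜 E : Type*} [RCLike 𝕜] [NormedAddCommGroup E] [InnerProductSpace 𝕜 E]
  {G : ι → E}

/-- Test the upper bound against the coefficients `⟪G k, f⟫` themselves. -/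
lemma UpperRieszBound.sum_norm_inner_sq_le {B : ℝ} (hG : UpperRieszBound 𝕜 G B) (hB : 0 ≤ B)
    (s : Finset ι) (f : E) : ∑ k ∈ s, ‖⟪G k, f⟫_𝕜‖ ^ 2 ≤ B * ‖f‖ ^ 2 := by
  set A := ∑ k ∈ s, ‖⟪G k, f⟫_𝕜‖ ^ 2
  set g := ∑ k ∈ s, ⟪G k, f⟫_𝕜 • G k
  have hA : 0 ≤ A := Finset.sum_nonneg fun _ _ => sq_nonneg _
  have hinner : ⟪g, f⟫_𝕜 = A := by
    simp only [g, A, sum_inner, inner_smul_left, RCLike.conj_mul]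
    push_cast
    rfl
  have hAg : A ≤ ‖g‖ * ‖f‖ := by
    simpa [hinner, abs_of_nonneg hA] using norm_inner_le_norm (𝕜 := 𝕜) g f
  have : A * A ≤ A * (B * ‖f‖ ^ 2) :=
    calc A * A ≤ ‖g‖ ^ 2 * ‖f‖ ^ 2 := by nlinarith [norm_nonneg g, norm_nonneg f]
      _ ≤ B * A * ‖f‖ ^ 2 := by gcongr; exact hG s _
      _ = A * (B * ‖f‖ ^ 2) := by ring
  rcases hA.eq_or_lt with hA0 | hApos
  · rw [← hA0]; positivity
  · exact le_of_mul_le_mul_left this hApos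

lemma UpperRieszBound.summable_norm_inner_sq {B : ℝ} (hG : UpperRieszBound 𝕜 G B)
    (hB : 0 ≤ B) (f : E) : Summable fun k => ‖⟪G k, f⟫_𝕜‖ ^ 2 :=
  summable_of_sum_le (fun _ => sq_nonneg _) fun s => hG.sum_norm_inner_sq_le hB s f

lemma UpperRieszBound.tsum_norm_inner_sq_le {B : ℝ} (hG : UpperRieszBound 𝕜 G B)
    (hB : 0 ≤ B) (f : E) : ∑' k, ‖⟪G k, f⟫_𝕜‖ ^ 2 ≤ B * ‖f‖ ^ 2 :=
  (hG.summable_norm_inner_sq hB f).tsum_le_of_sum_le fun s => hG.sum_norm_inner_sq_le hB s f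

lemma LowerRieszBound.linearIndependent {L : ℝ} (hG : LowerRieszBound 𝕜 G L) (hL : 0 < L) :
    LinearIndependent 𝕜 G := by
  refine linearIndependent_iff'.2 fun s c hsum i hi => ?_
  have hzero : ∑ k ∈ s, ‖c k‖ ^ 2 = 0 := by
    have := hG s c
    rw [hsum, norm_zero, zero_pow two_ne_zero] at this
    exact le_antisymm (nonpos_of_mul_nonpos_right this hL)
      (Finset.sum_nonneg fun _ _ => sq_nonneg _)
  simpa using (Finset.sum_eq_zero_iff_of_nonneg fun k _ => sq_nonneg ‖c k‖).1 hzero i hi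

end InnerProductSpace

namespace HilbertBasis

variable {ι 𝕜 E F : Type*} [RCLike 𝕜] [NormedAddCommGroup E] [InnerProductSpace 𝕜 E]
  [NormedAddCommGroup F] [NormedSpace 𝕜 F] [CompleteSpace F]

lemma hasSum_norm_repr_sq (e : HilbertBasis ι 𝕜 E) (x : E) :
    HasSum (fun k => ‖e.repr x k‖ ^ 2) (‖x‖ ^ 2) := by
  have h := lp.hasSum_norm (p := 2) (by norm_num) (e.repr x)
  rw [e.repr.norm_map] at h
  simpa using h

variable (e : HilbertBasis ι 𝕜 E) {G : ι → F} {B : ℝ}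

lemma summable_repr_smul (hG : UpperRieszBound 𝕜 G B) (hB : 0 ≤ B) (x : E) :
    Summable fun k => e.repr x k • G k :=
  hG.summable_smul hB (e.hasSum_norm_repr_sq x).summable

noncomputable def synthesis (hG : UpperRieszBound 𝕜 G B) (hB : 0 ≤ B) : E →L[𝕜] F :=
  LinearMap.mkContinuous
    { toFun := fun x => ∑' k, e.repr x k • G k
      map_add' := fun x y => by
        simp only [map_add, lp.coeFn_add, Pi.add_apply, add_smul]
        exact (e.summable_repr_smul hG hB x).tsum_add (e.summable_repr_smul hG hB y)
      map_smul' := fun a x => by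
        simp only [map_smul, lp.coeFn_smul, Pi.smul_apply, smul_eq_mul, mul_smul]
        exact (e.summable_repr_smul hG hB x).tsum_const_smul a }
    (Real.sqrt B) fun x => by
      rw [← Real.sqrt_sq (norm_nonneg _), ← Real.sqrt_sq (norm_nonneg x), ← Real.sqrt_mul hB]
      refine Real.sqrt_le_sqrt ?_
      simpa [(e.hasSum_norm_repr_sq x).tsum_eq] using
        hG.norm_tsum_smul_sq_le hB (e.hasSum_norm_repr_sq x).summable

lemma synthesis_apply (hG : UpperRieszBound 𝕜 G B) (hB : 0 ≤ B) (x : E) :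
    e.synthesis hG hB x = ∑' k, e.repr x k • G k :=
  rfl

lemma synthesis_apply_self (hG : UpperRieszBound 𝕜 G B) (hB : 0 ≤ B) (k : ι) :
    e.synthesis hG hB (e k) = G k := by
  classical
  rw [synthesis_apply, tsum_eq_single k fun j hj => by simp [e.repr_self, hj], e.repr_self]
  simp

lemma le_norm_synthesis_sq (hG : UpperRieszBound 𝕜 G B) (hB : 0 ≤ B) {L : ℝ}
    (hL : LowerRieszBound 𝕜 G L) (x : E) : L * ‖x‖ ^ 2 ≤ ‖e.synthesis hG hB x‖ ^ 2 :=
  le_of_tendsto_of_tendsto' ((e.hasSum_norm_repr_sq x).const_smul L)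
    ((e.summable_repr_smul hG hB x).hasSum.norm.pow 2) fun s => by
      simpa [Finset.mul_sum] using hL s (e.repr x)

lemma bijective_synthesis [CompleteSpace E] (hG : UpperRieszBound 𝕜 G B) (hB : 0 ≤ B) {L : ℝ}
    (hL : LowerRieszBound 𝕜 G L) (hL0 : 0 < L)
    (hdense : (Submodule.span 𝕜 (Set.range G)).topologicalClosure = ⊤) :
    Function.Bijective (e.synthesis hG hB) := by
  set M := e.synthesis hG hB
  have hbound : ∀ x, ‖x‖ ≤ ((Real.sqrt L)⁻¹.toNNReal : ℝ) * ‖M x‖ := fun x => by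
    rw [Real.coe_toNNReal _ (by positivity), le_inv_mul_iff₀ (by positivity)]
    refine le_of_pow_le_pow_left₀ two_ne_zero (norm_nonneg _) ?_
    rw [mul_pow, Real.sq_sqrt hL0.le]
    exact e.le_norm_synthesis_sq hG hB hL x
  have hanti := M.antilipschitz_of_bound hbound
  refine ⟨hanti.injective, ?_⟩
  have hclosed : IsClosed (LinearMap.range (M : E →ₗ[𝕜] F) : Set F) := by
    rw [LinearMap.coe_range]
    exact hanti.isClosed_range M.uniformContinuous
  refine LinearMap.range_eq_top.1 (eq_top_iff.2 ?_)
  rw [← hdense]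
  refine Submodule.topologicalClosure_minimal _ (Submodule.span_le.2 ?_) hclosed
  rintro _ ⟨k, rfl⟩
  exact ⟨e k, e.synthesis_apply_self hG hB k⟩

end HilbertBasis

section GramSchmidt

variable {ι 𝕜 E : Type*} [RCLike 𝕜] [NormedAddCommGroup E] [InnerProductSpace 𝕜 E]
  [CompleteSpace E] [LinearOrder ι] [LocallyFiniteOrderBot ι] [WellFoundedLT ι]

noncomputable def HilbertBasis.gramSchmidt {G : ι → E} (hli : LinearIndependent 𝕜 G)
    (hdense : (Submodule.span 𝕜 (Set.range G)).topologicalClosure = ⊤) : HilbertBasis ι 𝕜 E :=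
  HilbertBasis.mk (InnerProductSpace.gramSchmidtNormed_orthonormal hli) <| by
    rw [InnerProductSpace.span_gramSchmidtNormed_range, InnerProductSpace.span_gramSchmidt,
      hdense]

theorem exists_hilbertBasis_bijective_of_rieszBounds {G : ι → E} {L P : ℝ}
    (hL : LowerRieszBound 𝕜 G L) (hL0 : 0 < L) (hP : UpperRieszBound 𝕜 G P) (hP0 : 0 ≤ P)
    (hdense : (Submodule.span 𝕜 (Set.range G)).topologicalClosure = ⊤) :
    ∃ (e : HilbertBasis ι 𝕜 E) (M : E →L[𝕜] E), Function.Bijective M ∧ ∀ k, G k = M (e k) :=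
  let e := HilbertBasis.gramSchmidt (hL.linearIndependent hL0) hdense
  ⟨e, e.synthesis hP hP0, e.bijective_synthesis hP hP0 hL hL0 hdense,
    fun k => (e.synthesis_apply_self hP hP0 k).symm⟩

end GramSchmidt

lemma Submodule.topologicalClosure_span_range_comp_eq_top {ι R E F : Type*} [Semiring R]
    [AddCommMonoid E] [Module R E] [TopologicalSpace E] [ContinuousAdd E]
    [ContinuousConstSMul R E] [AddCommMonoid F] [Module R F] [TopologicalSpace F]
    [ContinuousAdd F] [ContinuousConstSMul R F] {A : E →L[R] F} (hA : Function.Surjective A)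
    {G : ι → E} (hG : (Submodule.span R (Set.range G)).topologicalClosure = ⊤) :
    (Submodule.span R (Set.range fun k => A (G k))).topologicalClosure = ⊤ := by
  rw [← Submodule.dense_iff_topologicalClosure_eq_top] at hG ⊢
  rw [Set.range_comp', ← ContinuousLinearMap.coe_coe A, Submodule.span_image, Submodule.map_coe,
    ContinuousLinearMap.coe_coe]
  exact hA.denseRange.dense_image A.continuous hG

lemma ContinuousLinearMap.bijective_of_comp_eq_one {R E : Type*} [Semiring R]
    [AddCommMonoid E] [Module R E] [TopologicalSpace E] {A B : E →L[R] E}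
    (hAB : A ∘L B = 1) (hBA : B ∘L A = 1) : Function.Bijective A :=
  Function.bijective_iff_has_inverse.2 ⟨B, DFunLike.congr_fun hBA, DFunLike.congr_fun hAB⟩

section InverseSquare

variable {A : Type*} [Monoid A] {T R : A}

lemma commute_of_mul_mul_self_eq_one (h₁ : T * (R * R) = 1) (h₂ : R * R * T = 1) :
    Commute T R :=
  calc T * R = T * R * (R * R * T) := by rw [h₂, mul_one]
    _ = T * (R * R) * (R * T) := by simp only [mul_assoc]
    _ = R * T := by rw [h₁, one_mul]

lemma mul_mul_eq_one_of_mul_mul_self_eq_one (h₁ : T * (R * R) = 1) (h₂ : R * R * T = 1) :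
    R * T * R = 1 := by
  rw [mul_assoc, (commute_of_mul_mul_self_eq_one h₁ h₂).eq, ← mul_assoc, h₂]

lemma mul_self_eq_of_mul_mul_self_eq_one (h₁ : T * (R * R) = 1) (h₂ : R * R * T = 1) :
    R * T * (R * T) = T := by
  rw [mul_assoc, ← mul_assoc T, (commute_of_mul_mul_self_eq_one h₁ h₂).eq, mul_assoc,
    ← mul_assoc, ← mul_assoc, h₂, one_mul]

end InverseSquare

/-- `R * (C * U)` is a self-adjoint square root of `C * U`, which turns the mixed form
`⟪U g, C g⟫` into a squared norm. -/
lemma inner_apply_apply_eq_norm_sq {𝕜 H : Type*} [RCLike 𝕜] [NormedAddCommGroup H]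
    [InnerProductSpace 𝕜 H] [CompleteSpace H] {U C R : H →L[𝕜] H} (hU : IsSelfAdjoint U)
    (hC : IsSelfAdjoint C) (hR : IsSelfAdjoint R) (hUC : Commute U C)
    (h₁ : C * U * (R * R) = 1) (h₂ : R * R * (C * U) = 1) (g : H) :
    ⟪U g, C g⟫_𝕜 = (‖(R * (C * U)) g‖ : 𝕜) ^ 2 := by
  set S := R * (C * U)
  have hT : IsSelfAdjoint (C * U) := (hC.commute_iff hU).1 hUC.symm
  have hS : IsSelfAdjoint S :=
    (hR.commute_iff hT).1 (commute_of_mul_mul_self_eq_one h₁ h₂).symm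
  calc ⟪U g, C g⟫_𝕜 = ⟪g, (C * U) g⟫_𝕜 :=
        (hU.isSymmetric g (C g)).trans (congrArg _ (DFunLike.congr_fun hUC.eq g))
    _ = ⟪S g, S g⟫_𝕜 := by
        rw [← mul_self_eq_of_mul_mul_self_eq_one h₁ h₂]
        exact (hS.isSymmetric g (S g)).symm
    _ = (‖S g‖ : 𝕜) ^ 2 := inner_self_eq_norm_sq_to_K _

lemma norm_inner_sum_smul_eq_norm_sq {ι 𝕜 H : Type*} [RCLike 𝕜] [NormedAddCommGroup H]
    [InnerProductSpace 𝕜 H] [CompleteSpace H] {U C R : H →L[𝕜] H} (hU : IsSelfAdjoint U)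
    (hC : IsSelfAdjoint C) (hR : IsSelfAdjoint R) (hUC : Commute U C)
    (h₁ : C * U * (R * R) = 1) (h₂ : R * R * (C * U) = 1) (G : ι → H) (s : Finset ι)
    (c : ι → 𝕜) :
    ‖⟪∑ k ∈ s, c k • U (G k), ∑ k ∈ s, c k • C (G k)⟫_𝕜‖ =
      ‖∑ k ∈ s, c k • (R * (C * U)) (G k)‖ ^ 2 := by
  simp only [← map_smul, ← map_sum]
  rw [inner_apply_apply_eq_norm_sq hU hC hR hUC h₁ h₂, norm_pow, RCLike.norm_ofReal, abs_norm]

open scoped ComplexInnerProductSpace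
open ContinuousLinearMap

theorem stmt_18_general {H : Type*} [NormedAddCommGroup H] [InnerProductSpace ℂ H]
    [CompleteSpace H]
    (U Ui C Ci : H →L[ℂ] H)
    (hUUi : U ∘L Ui = 1) (hUiU : Ui ∘L U = 1)
    (hCCi : C ∘L Ci = 1) (hCiC : Ci ∘L C = 1)
    (hU : U.IsPositive) (hC : C.IsPositive)
    (hcomm : U ∘L C = C ∘L U)
    (F : ℕ → H)
    (hcomplete : (Submodule.span ℂ (Set.range F)).topologicalClosure = ⊤)
    (L P : ℝ) (hL : 0 < L) (hP : 0 < P)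
    (hineq : ∀ (s : Finset ℕ) (c : ℕ → ℂ),
      L * ∑ k ∈ s, ‖c k‖ ^ 2 ≤
        ‖⟪∑ k ∈ s, c k • U (F k), ∑ k ∈ s, c k • C (F k)⟫‖ ∧
      ‖⟪∑ k ∈ s, c k • U (F k), ∑ k ∈ s, c k • C (F k)⟫‖ ≤
        P * ∑ k ∈ s, ‖c k‖ ^ 2)
    (R : H →L[ℂ] H) (hR : R.IsPositive)
    (hRsq1 : (C ∘L U) ∘L (R ∘L R) = 1) (hRsq2 : (R ∘L R) ∘L (C ∘L U) = 1) :
    (∀ (s : Finset ℕ) (c : ℕ → ℂ),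
      ‖∑ k ∈ s, c k • F k‖ ^ 2 ≤ ‖R‖ ^ 2 * P * ∑ k ∈ s, ‖c k‖ ^ 2) ∧
    (∀ c : ℕ → ℂ, Summable (fun k => ‖c k‖ ^ 2) →
      ∃ x : H, HasSum (fun k => c k • F k) x) ∧
    (∃ B' : ℝ, 0 < B' ∧ ∀ f : H,
      Summable (fun k => ‖⟪F k, f⟫‖ ^ 2) ∧
      ∑' k, ‖⟪F k, f⟫‖ ^ 2 ≤ B' * ‖f‖ ^ 2) ∧
    (∃ (e : HilbertBasis ℕ ℂ H) (M : H →L[ℂ] H),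
      Function.Bijective M ∧ ∀ k, F k = Ui (C (M (e k)))) := by
  set S := R ∘L (C ∘L U)
  have hRS : R ∘L S = 1 := (mul_assoc R R (C * U)).symm.trans hRsq2
  have hSR : S ∘L R = 1 := mul_mul_eq_one_of_mul_mul_self_eq_one hRsq1 hRsq2
  have hRSx : ∀ x, R (S x) = x := DFunLike.congr_fun hRS
  have hnorm := norm_inner_sum_smul_eq_norm_sq hU.isSelfAdjoint hC.isSelfAdjoint
    hR.isSelfAdjoint hcomm hRsq1 hRsq2 F
  have hSlow : LowerRieszBound ℂ (fun k => S (F k)) L := fun s c => hnorm s c ▸ (hineq s c).1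
  have hSup : UpperRieszBound ℂ (fun k => S (F k)) P := fun s c => hnorm s c ▸ (hineq s c).2
  have hFup := hSup.of_leftInverse hRSx
  have hB : 0 ≤ ‖R‖ ^ 2 * P := by positivity
  refine ⟨hFup, fun c hc => ⟨_, (hFup.summable_smul hB hc).hasSum⟩,
    ⟨‖R‖ ^ 2 * P + 1, by positivity, fun f => ⟨hFup.summable_norm_inner_sq hB f,
      (hFup.tsum_norm_inner_sq_le hB f).trans (by gcongr; linarith)⟩⟩, ?_⟩
  obtain ⟨e, M, hM, hSFe⟩ := exists_hilbertBasis_bijective_of_rieszBounds hSlow hL hSup hP.le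
    (Submodule.topologicalClosure_span_range_comp_eq_top
      (bijective_of_comp_eq_one hSR hRS).2 hcomplete)
  refine ⟨e, Ci ∘L U ∘L R ∘L M, ?_, fun k => ?_⟩
  · exact (bijective_of_comp_eq_one hCiC hCCi).comp ((bijective_of_comp_eq_one hUUi hUiU).comp
      ((bijective_of_comp_eq_one hRS hSR).comp hM))
  · have hCCix : ∀ x, C (Ci x) = x := DFunLike.congr_fun hCCi
    have hUiUx : ∀ x, Ui (U x) = x := DFunLike.congr_fun hUiU
    rw [comp_apply, comp_apply, comp_apply, ← hSFe k, hRSx, hCCix, hUiUx]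

theorem stmt_18 {H : Type*} [NormedAddCommGroup H] [InnerProductSpace ℂ H]
    [CompleteSpace H]
    (U Ui C Ci : H →L[ℂ] H)
    (hUUi : U ∘L Ui = 1) (hUiU : Ui ∘L U = 1)
    (hCCi : C ∘L Ci = 1) (hCiC : Ci ∘L C = 1)
    (hU : U.IsPositive) (hC : C.IsPositive)
    (hcomm : U ∘L C = C ∘L U) (hcomm' : Ui ∘L C = C ∘L Ui)
    (F : ℕ → H)
    (hcomplete : (Submodule.span ℂ (Set.range F)).topologicalClosure = ⊤)
    (L P : ℝ) (hL : 0 < L) (hP : 0 < P)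
    (hineq : ∀ (s : Finset ℕ) (c : ℕ → ℂ),
      L * ∑ k ∈ s, ‖c k‖ ^ 2 ≤
        ‖⟪∑ k ∈ s, c k • U (F k), ∑ k ∈ s, c k • C (F k)⟫‖ ∧
      ‖⟪∑ k ∈ s, c k • U (F k), ∑ k ∈ s, c k • C (F k)⟫‖ ≤
        P * ∑ k ∈ s, ‖c k‖ ^ 2)
    (R : H →L[ℂ] H) (hR : R.IsPositive)
    (hRsq1 : (C ∘L U) ∘L (R ∘L R) = 1) (hRsq2 : (R ∘L R) ∘L (C ∘L U) = 1) :
    (∀ (s : Finset ℕ) (c : ℕ → ℂ),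
      ‖∑ k ∈ s, c k • F k‖ ^ 2 ≤ ‖R‖ ^ 2 * P * ∑ k ∈ s, ‖c k‖ ^ 2) ∧
    (∀ c : ℕ → ℂ, Summable (fun k => ‖c k‖ ^ 2) →
      ∃ x : H, HasSum (fun k => c k • F k) x) ∧
    (∃ B' : ℝ, 0 < B' ∧ ∀ f : H,
      Summable (fun k => ‖⟪F k, f⟫‖ ^ 2) ∧
      ∑' k, ‖⟪F k, f⟫‖ ^ 2 ≤ B' * ‖f‖ ^ 2) ∧
    (∃ (e : HilbertBasis ℕ ℂ H) (M : H →L[ℂ] H),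
      Function.Bijective M ∧ ∀ k, F k = Ui (C (M (e k)))) :=
  stmt_18_general U Ui C Ci hUUi hUiU hCCi hCiC hU hC hcomm F hcomplete L P hL hP hineq R hR hRsq1
    hRsq2
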